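/- Let A ∈ [0,1]^{n×m}, b ∈ [0,1]^n, Δ the Chebyshev distance of b, and η = Aᵗ ⊡_→ F(b̄(Δ)). For any x ∈ [0,1]^m: ‖A ⊡ x - b‖_∞ = Δ if and only if b̲(Δ) ≤ A ⊡ x componentwise and x ≤ η componentwise. -/

import Mathlib

/-! `x ↦ A ⊡ x` and `c ↦ Aᵗ ⊡_→ c` form a Galois connection on `[0,1]`-valued vectors
(Gödel residuation: `min a x ≤ c ↔ x ≤ a →G c`). Hence `x ≤ η` says `A ⊡ x ≤ F(b̄(Δ))`; since
`F(c) ≤ c` while `A ⊡ x ≤ c` already forces `A ⊡ x ≤ F(c)`, this is `A ⊡ x ≤ b̄(Δ)`, i.e.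
`A ⊡ x ≤ b + Δ`. As `A ⊡ x ≥ 0`, the condition `b̲(Δ) ≤ A ⊡ x` is `b - Δ ≤ A ⊡ x`, so both
conditions together say `‖b - A ⊡ x‖_∞ ≤ Δ`; equality then holds because `Δ` is the infimum. -/

noncomputable def godel (x y : ℝ) : ℝ := if x ≤ y then 1 else y

noncomputable def maxMin {n m : ℕ} [NeZero m] (A : Fin n → Fin m → ℝ) (x : Fin m → ℝ) :
    Fin n → ℝ :=
  fun i => Finset.univ.sup' Finset.univ_nonempty (fun j => min (A i j) (x j))

noncomputable def godelComp {n m : ℕ} [NeZero n] (A : Fin n → Fin m → ℝ) (c : Fin n → ℝ) :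
    Fin m → ℝ :=
  fun j => Finset.univ.inf' Finset.univ_nonempty (fun i => godel (A i j) (c i))

noncomputable def Fmap {n m : ℕ} [NeZero n] [NeZero m] (A : Fin n → Fin m → ℝ)
    (c : Fin n → ℝ) : Fin n → ℝ :=
  maxMin A (godelComp A c)

noncomputable def chebNorm {n : ℕ} [NeZero n] (b c : Fin n → ℝ) : ℝ :=
  Finset.univ.sup' Finset.univ_nonempty (fun i => |b i - c i|)

lemma min_le_iff_le_godel {a x c : ℝ} (hx : x ≤ 1) : min a x ≤ c ↔ x ≤ godel a c := by
  unfold godel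
  split_ifs with h
  · exact ⟨fun _ => hx, fun _ => (min_le_left a x).trans h⟩
  · rw [min_le_iff]
    exact ⟨fun hc => hc.resolve_left h, Or.inr⟩

lemma godel_le_one {a c : ℝ} (hc : c ≤ 1) : godel a c ≤ 1 := by
  unfold godel
  split_ifs
  exacts [le_rfl, hc]

lemma godelComp_le_one {n m : ℕ} [NeZero n] (A : Fin n → Fin m → ℝ) {c : Fin n → ℝ}
    (hc : c ≤ 1) : godelComp A c ≤ 1 :=
  fun _ => (Finset.inf'_le _ (Finset.mem_univ 0)).trans (godel_le_one (hc 0))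

section MaxMin

variable {n m : ℕ} [NeZero m] (A : Fin n → Fin m → ℝ)

lemma maxMin_nonneg (hA : ∀ i j, 0 ≤ A i j) {x : Fin m → ℝ} (hx : 0 ≤ x) : 0 ≤ maxMin A x :=
  fun i => (le_min (hA i 0) (hx 0)).trans
    (Finset.le_sup' (fun j => min (A i j) (x j)) (Finset.mem_univ 0))

lemma maxMin_le_one {x : Fin m → ℝ} (hx : x ≤ 1) : maxMin A x ≤ 1 :=
  fun _ => Finset.sup'_le _ _ fun j _ => (min_le_right _ _).trans (hx j)

lemma maxMin_mono {x y : Fin m → ℝ} (h : x ≤ y) : maxMin A x ≤ maxMin A y :=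
  fun _ => Finset.sup'_mono_fun fun j _ => min_le_min le_rfl (h j)

variable [NeZero n]

lemma maxMin_le_iff_le_godelComp {x : Fin m → ℝ} (hx : x ≤ 1) (c : Fin n → ℝ) :
    maxMin A x ≤ c ↔ x ≤ godelComp A c := by
  simp only [Pi.le_def, maxMin, godelComp, Finset.sup'_le_iff, Finset.le_inf'_iff,
    Finset.mem_univ, true_implies, min_le_iff_le_godel (hx _)]
  exact forall_comm

lemma Fmap_le {c : Fin n → ℝ} (hc : c ≤ 1) : Fmap A c ≤ c :=
  (maxMin_le_iff_le_godelComp A (godelComp_le_one A hc) c).mpr le_rfl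

lemma le_godelComp_Fmap_iff {x : Fin m → ℝ} (hx : x ≤ 1) {c : Fin n → ℝ} (hc : c ≤ 1) :
    x ≤ godelComp A (Fmap A c) ↔ maxMin A x ≤ c := by
  rw [← maxMin_le_iff_le_godelComp A hx]
  exact ⟨fun h => h.trans (Fmap_le A hc),
    fun h => maxMin_mono A ((maxMin_le_iff_le_godelComp A hx c).mp h)⟩

end MaxMin

section ChebNorm

variable {n : ℕ} [NeZero n]

lemma chebNorm_nonneg (b c : Fin n → ℝ) : 0 ≤ chebNorm b c :=
  (abs_nonneg _).trans (Finset.le_sup' (fun i => |b i - c i|) (Finset.mem_univ 0))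

lemma chebNorm_le_iff {b c : Fin n → ℝ} {d : ℝ} :
    chebNorm b c ≤ d ↔ ∀ i, b i - d ≤ c i ∧ c i ≤ b i + d := by
  simp only [chebNorm, Finset.sup'_le_iff, Finset.mem_univ, true_implies]
  refine forall_congr' fun i => ?_
  rw [abs_sub_le_iff]
  exact and_congr sub_le_comm sub_le_iff_le_add'

lemma sInf_chebNorm_maxMin_le {m : ℕ} [NeZero m] (A : Fin n → Fin m → ℝ) (b : Fin n → ℝ)
    {x : Fin m → ℝ} (hx : ∀ j, x j ∈ Set.Icc (0:ℝ) 1) :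
    sInf {d : ℝ | ∃ x : Fin m → ℝ, (∀ j, x j ∈ Set.Icc (0:ℝ) 1) ∧
      d = chebNorm b (maxMin A x)} ≤ chebNorm b (maxMin A x) :=
  csInf_le ⟨0, by rintro d ⟨y, -, rfl⟩; exact chebNorm_nonneg _ _⟩ ⟨x, hx, rfl⟩

end ChebNorm

theorem stmt15_general {n m : ℕ} [NeZero n] [NeZero m] (A : Fin n → Fin m → ℝ)
    (hA : ∀ i j, A i j ∈ Set.Icc (0:ℝ) 1)
    (b : Fin n → ℝ)
    (Δ : ℝ)
    (hΔ : Δ = sInf {d : ℝ | ∃ x : Fin m → ℝ, (∀ j, x j ∈ Set.Icc (0:ℝ) 1) ∧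
        d = chebNorm b (maxMin A x)})
    (x : Fin m → ℝ) (hx : ∀ j, x j ∈ Set.Icc (0:ℝ) 1) :
    chebNorm b (maxMin A x) = Δ ↔
      (∀ i, max (b i - Δ) 0 ≤ maxMin A x i) ∧
        x ≤ godelComp A (Fmap A (fun k => min (b k + Δ) 1)) := by
  have hx1 : x ≤ 1 := fun j => (hx j).2
  have hlower : (∀ i, max (b i - Δ) 0 ≤ maxMin A x i) ↔ ∀ i, b i - Δ ≤ maxMin A x i := by
    refine forall_congr' fun i => ?_
    rw [max_le_iff]
    exact and_iff_left (maxMin_nonneg A (fun i j => (hA i j).1) (fun j => (hx j).1) i)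
  have hupper : x ≤ godelComp A (Fmap A (fun k => min (b k + Δ) 1)) ↔
      ∀ i, maxMin A x i ≤ b i + Δ := by
    rw [le_godelComp_Fmap_iff A hx1 (c := fun k => min (b k + Δ) 1) fun k => min_le_right _ _]
    simp only [Pi.le_def, le_min_iff]
    exact forall_congr' fun i => and_iff_left (maxMin_le_one A hx1 i)
  rw [hlower, hupper, ← forall_and, ← chebNorm_le_iff]
  exact ⟨le_of_eq, fun h => h.antisymm (hΔ ▸ sInf_chebNorm_maxMin_le A b hx)⟩

theorem stmt15 {n m : ℕ} [NeZero n] [NeZero m] (A : Fin n → Fin m → ℝ)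
    (hA : ∀ i j, A i j ∈ Set.Icc (0:ℝ) 1)
    (b : Fin n → ℝ) (hb : ∀ i, b i ∈ Set.Icc (0:ℝ) 1)
    (Δ : ℝ)
    (hΔ : Δ = sInf {d : ℝ | ∃ x : Fin m → ℝ, (∀ j, x j ∈ Set.Icc (0:ℝ) 1) ∧
        d = chebNorm b (maxMin A x)})
    (x : Fin m → ℝ) (hx : ∀ j, x j ∈ Set.Icc (0:ℝ) 1) :
    chebNorm b (maxMin A x) = Δ ↔
      (∀ i, max (b i - Δ) 0 ≤ maxMin A x i) ∧
        x ≤ godelComp A (Fmap A (fun k => min (b k + Δ) 1)) :=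
  stmt15_general A hA b Δ hΔ x hx
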